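/- Let X be a proper CAT(0) geodesic metric space and let a group G act on X by isometries, properly discontinuously and cocompactly; fix p ∈ X and D > 0 such that every x ∈ X satisfies d(x, g·p) ≤ 2D for some g ∈ G. Let S = { g ∈ G : g·B(p,4D) ∩ B(p,4D) ≠ ∅ } (where B(p,4D) is the open ball), and let R be the set of all words over S of length at most 46 that represent the identity e. Then S is a finite symmetric generating set of G, R is finite with normal closure in F_S equal to the kernel of μ : F_S → G, and every word w = s₁⋯sₙ over S representing e satisfies Area_R(w) ≤ 24 · Σ_{i=1}^n (d_S(w̄(i), e) + 1). -/

import Mathlib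

/-!
The orbit of `p` is a `2D`-net, so cutting a geodesic from `p` to `g • p` into pieces of length
`< 4D` and replacing the cut points by nearby orbit points writes `g` as a short word in `S`.
Cutting into `|g| = wordDist S g 1` pieces gives a combing path from `1` to `g` that fellow-travels
a geodesic. For neighbours `g` and `g s`, CAT(0) convexity keeps the two geodesics `16D`-close at
matching times, so the two combing paths are joined by a ladder of rungs of length `≤ 8`, whose
cells are loops of length `≤ 24` costing at most `13` relators each. A loop `w` is then filled by
the `|w|` ladders between the combing paths of its consecutive prefixes.
-/

open scoped Pointwise

/-- The product in `G` of a word over the subset `S ⊆ G`. -/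
def wordProd {G : Type*} [Group G] (S : Set G) (w : List S) : G :=
  (w.map (fun s => (s : G))).prod

/-- The word metric `d_S(a,b)`: the least `n` such that `b⁻¹ * a` is a product of
`n` elements of `S`. -/
noncomputable def wordDist {G : Type*} [Group G] (S : Set G) (a b : G) : ℕ :=
  sInf {n | ∃ w : List S, w.length = n ∧ wordProd S w = b⁻¹ * a}

/-- The evaluation homomorphism `μ : F_S → G` from the free group on `S`. -/
noncomputable def muEval {G : Type*} [Group G] (S : Set G) : FreeGroup S →* G :=
  FreeGroup.lift (fun s => (s : G))

/-- A word over `S`, regarded as an element of the free group `F_S`. -/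
def wordToFree {G : Type*} [Group G] (S : Set G) (w : List S) : FreeGroup S :=
  (w.map FreeGroup.of).prod

/-- The combinatorial area of a word `w` over `S` with respect to the relator set
`R ⊆ F_S`: the least `k` such that `w = ∏_{i=1}^k vᵢ rᵢ vᵢ⁻¹` in `F_S` with each
`rᵢ ∈ R` or `rᵢ⁻¹ ∈ R`. -/
noncomputable def area {G : Type*} [Group G] (S : Set G) (R : Set (FreeGroup S))
    (w : List S) : ℕ :=
  sInf {k | ∃ v r : Fin k → FreeGroup S,
    (∀ i, r i ∈ R ∨ (r i)⁻¹ ∈ R) ∧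
    wordToFree S w = (List.ofFn (fun i => v i * r i * (v i)⁻¹)).prod}

/-- `γ : ℝ → X` is a geodesic from `x` to `y`: it is defined (relevantly) on
`[0, d(x,y)]`, starts at `x`, ends at `y`, and is an isometric embedding there. -/
def IsGeodesic {X : Type*} [MetricSpace X] (γ : ℝ → X) (x y : X) : Prop :=
  γ 0 = x ∧ γ (dist x y) = y ∧
    ∀ s ∈ Set.Icc (0 : ℝ) (dist x y), ∀ t ∈ Set.Icc (0 : ℝ) (dist x y),
      dist (γ s) (γ t) = |s - t|

/-- `X` is a geodesic metric space: every pair of points is joined by a geodesic. -/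
def IsGeodesicSpace (X : Type*) [MetricSpace X] : Prop :=
  ∀ x y : X, ∃ γ : ℝ → X, IsGeodesic γ x y

/-- `X` is a CAT(0) space: the comparison inequality holds along every geodesic. -/
def IsCAT0 (X : Type*) [MetricSpace X] : Prop :=
  ∀ x y z : X, ∀ γ : ℝ → X, IsGeodesic γ y z → ∀ t ∈ Set.Icc (0 : ℝ) 1,
    dist x (γ (t * dist y z)) ^ 2 ≤
      (1 - t) * dist x y ^ 2 + t * dist x z ^ 2 - t * (1 - t) * dist y z ^ 2

section Area

variable {H : Type*} [Group H] {R : Set H} {x y : H} {k l : ℕ}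

def AreaLE (R : Set H) (x : H) (k : ℕ) : Prop :=
  ∃ l : List H, l.length ≤ k ∧ (∀ y ∈ l, y ∈ Group.conjugatesOfSet (R ∪ R⁻¹)) ∧
    l.prod = x

namespace AreaLE

theorem mono (h : AreaLE R x k) (hkl : k ≤ l) : AreaLE R x l :=
  let ⟨L, hL, hmem, hprod⟩ := h
  ⟨L, hL.trans hkl, hmem, hprod⟩

theorem one : AreaLE R 1 0 := ⟨[], le_rfl, by simp, rfl⟩

theorem of_mem (hx : x ∈ R) : AreaLE R x 1 :=
  ⟨[x], le_rfl, by simpa using Group.subset_conjugatesOfSet (Set.mem_union_left _ hx), by simp⟩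

theorem mul (hx : AreaLE R x k) (hy : AreaLE R y l) : AreaLE R (x * y) (k + l) := by
  obtain ⟨L, hL, hmem, rfl⟩ := hx
  obtain ⟨L', hL', hmem', rfl⟩ := hy
  refine ⟨L ++ L', by simp only [List.length_append]; omega, ?_, List.prod_append⟩
  simp only [List.mem_append]
  rintro z (hz | hz)
  exacts [hmem z hz, hmem' z hz]

theorem conj (c : H) (hx : AreaLE R x k) : AreaLE R (c * x * c⁻¹) k := by
  obtain ⟨L, hL, hmem, rfl⟩ := hx
  refine ⟨L.map (MulAut.conj c), by simpa using hL, ?_, (map_list_prod (MulAut.conj c) L).symm⟩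
  simp only [List.mem_map, MulAut.conj_apply]
  rintro _ ⟨z, hz, rfl⟩
  exact Group.conj_mem_conjugatesOfSet (hmem z hz)

theorem inv (hx : AreaLE R x k) : AreaLE R x⁻¹ k := by
  obtain ⟨L, hL, hmem, rfl⟩ := hx
  refine ⟨(L.map (·⁻¹)).reverse, by simpa using hL, ?_, (List.prod_inv_reverse L).symm⟩
  simp only [List.mem_reverse, List.mem_map]
  rintro _ ⟨z, hz, rfl⟩
  obtain ⟨a, ha, hconj⟩ := Group.mem_conjugatesOfSet_iff.1 (hmem z hz)
  obtain ⟨c, rfl⟩ := isConj_iff.1 hconj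
  refine Group.mem_conjugatesOfSet_iff.2 ⟨a⁻¹, ?_, isConj_iff.2 ⟨c, by group⟩⟩
  rw [Set.mem_union, Set.mem_inv, inv_inv]
  exact ha.symm

theorem mem_normalClosure (hx : AreaLE R x k) : x ∈ Subgroup.normalClosure R := by
  obtain ⟨L, -, hmem, rfl⟩ := hx
  have hsub : R ∪ R⁻¹ ⊆ Subgroup.normalClosure R := by
    rintro r (hr | hr)
    · exact Subgroup.subset_normalClosure hr
    · exact inv_inv r ▸ inv_mem (Subgroup.subset_normalClosure hr)
  exact list_prod_mem (fun y hy => Group.conjugatesOfSet_subset hsub (hmem y hy))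

end AreaLE

end Area

section Words

variable {G : Type*} [Group G] {S : Set G}

@[simp] theorem wordProd_nil : wordProd S [] = 1 := rfl

@[simp] theorem wordProd_cons (a : S) (w : List S) :
    wordProd S (a :: w) = (a : G) * wordProd S w := by
  simp [wordProd]

@[simp] theorem wordProd_append (u v : List S) :
    wordProd S (u ++ v) = wordProd S u * wordProd S v := by
  simp [wordProd]

@[simp] theorem wordToFree_nil : wordToFree S [] = 1 := rfl

@[simp] theorem wordToFree_cons (a : S) (w : List S) :
    wordToFree S (a :: w) = FreeGroup.of a * wordToFree S w := by
  simp [wordToFree]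

@[simp] theorem wordToFree_append (u v : List S) :
    wordToFree S (u ++ v) = wordToFree S u * wordToFree S v := by
  simp [wordToFree]

@[simp] theorem muEval_wordToFree (w : List S) : muEval S (wordToFree S w) = wordProd S w := by
  simp [muEval, wordToFree, wordProd, map_list_prod, Function.comp_def]

theorem wordProd_mem_closure (w : List S) : wordProd S w ∈ Subgroup.closure S := by
  induction w with
  | nil => exact one_mem _
  | cons a w ih => exact mul_mem (Subgroup.subset_closure a.2) ih

theorem wordProd_flatMap_range (q : ℕ → G) (σ : ℕ → List S)
    (hσ : ∀ j, wordProd S (σ j) = (q j)⁻¹ * q (j + 1)) (k : ℕ) :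
    wordProd S ((List.range k).flatMap σ) = (q 0)⁻¹ * q k := by
  induction k with
  | zero => simp
  | succ k ih => simp [List.range_succ, ih, hσ, mul_assoc]

theorem flatMap_range_eq_of_le {α : Type*} {σ : ℕ → List α} {k M : ℕ}
    (hσ : ∀ j, k ≤ j → σ j = []) (hkM : k ≤ M) :
    (List.range M).flatMap σ = (List.range k).flatMap σ := by
  induction M, hkM using Nat.le_induction with
  | base => rfl
  | succ M hkM ih => simp [List.range_succ, ih, hσ M hkM]

theorem wordDist_le_length {w : List S} {g : G} (h : wordProd S w = g) :
    wordDist S g 1 ≤ w.length :=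
  Nat.sInf_le ⟨w, rfl, by simp [h]⟩

theorem wordDist_one : wordDist S 1 1 = 0 :=
  Nat.le_zero.1 (wordDist_le_length (w := []) rfl)

-- The inverse of `wordToFree S u` in `F_S` is not a word over `S`; `invWord` spells it with the
-- letters `s⁻¹ ∈ S` instead, at the price of one relator `s s⁻¹` per letter.
def invWord (hS : ∀ s ∈ S, s⁻¹ ∈ S) (u : List S) : List S :=
  (u.map fun s => ⟨(s : G)⁻¹, hS s s.2⟩).reverse

variable (hS : ∀ s ∈ S, s⁻¹ ∈ S)

@[simp] theorem length_invWord (u : List S) : (invWord hS u).length = u.length := by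
  simp [invWord]

@[simp] theorem wordProd_invWord (u : List S) :
    wordProd S (invWord hS u) = (wordProd S u)⁻¹ := by
  induction u with
  | nil => simp [invWord]
  | cons a u ih => simp_all [invWord]

end Words

section Homotopy

variable {G : Type*} [Group G] {S : Set G} {R : Set (FreeGroup S)} {k l n : ℕ} {u v w : List S}

def WordHomotopic (R : Set (FreeGroup S)) (k : ℕ) (u v : List S) : Prop :=
  AreaLE R (wordToFree S u * (wordToFree S v)⁻¹) k

namespace WordHomotopic

theorem mono (h : WordHomotopic R k u v) (hkl : k ≤ l) : WordHomotopic R l u v :=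
  AreaLE.mono h hkl

theorem trans (huv : WordHomotopic R k u v) (hvw : WordHomotopic R l v w) :
    WordHomotopic R (k + l) u w := by
  have := AreaLE.mul huv hvw
  rwa [mul_assoc, inv_mul_cancel_left] at this

theorem append_left (x : List S) (h : WordHomotopic R k u v) :
    WordHomotopic R k (x ++ u) (x ++ v) := by
  simpa [WordHomotopic, mul_assoc] using AreaLE.conj (wordToFree S x) h

theorem append_right (y : List S) (h : WordHomotopic R k u v) :
    WordHomotopic R k (u ++ y) (v ++ y) := by
  simpa [WordHomotopic, mul_assoc] using h

theorem areaLE (h : WordHomotopic R k w []) : AreaLE R (wordToFree S w) k := by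
  simpa [WordHomotopic] using h

end WordHomotopic

theorem areaLE_wordToFree_mul_invWord (hS : ∀ s ∈ S, s⁻¹ ∈ S)
    (hR : ∀ w : List S, w.length ≤ n → wordProd S w = 1 → wordToFree S w ∈ R)
    (hn : 2 ≤ n) (u : List S) :
    AreaLE R (wordToFree S u * wordToFree S (invWord hS u)) u.length := by
  induction u with
  | nil => simpa [invWord] using AreaLE.one
  | cons a u ih =>
    set a' : S := ⟨(a : G)⁻¹, hS a a.2⟩
    have hcancel : AreaLE R (FreeGroup.of a * FreeGroup.of a') 1 :=
      AreaLE.of_mem (by simpa using hR [a, a'] (by simpa using hn) (by simp [a']))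
    have h := (ih.conj (FreeGroup.of a)).mul hcancel
    simp only [invWord, List.map_cons, List.reverse_cons] at h ⊢
    simp only [wordToFree_cons, wordToFree_append, List.length_cons] at h ⊢
    convert h using 1
    simp [mul_assoc, a']

theorem wordHomotopic_of_wordProd_eq (hS : ∀ s ∈ S, s⁻¹ ∈ S)
    (hR : ∀ w : List S, w.length ≤ n → wordProd S w = 1 → wordToFree S w ∈ R)
    (hn : 2 ≤ n) (huv : wordProd S u = wordProd S v) (hlen : u.length + v.length ≤ n) :
    WordHomotopic R (1 + v.length) u v := by
  have hloop : AreaLE R (wordToFree S (u ++ invWord hS v)) 1 :=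
    AreaLE.of_mem (hR _ (by simpa using hlen) (by simp [huv]))
  have := hloop.mul (areaLE_wordToFree_mul_invWord hS hR hn v).inv
  simpa [WordHomotopic, mul_assoc] using this

theorem WordHomotopic.ladder {σ τ ρ : ℕ → List S} {c₀ c : ℕ}
    (h₀ : WordHomotopic R c₀ (ρ 0) [])
    (hcell : ∀ j, WordHomotopic R c (σ j ++ ρ (j + 1)) (ρ j ++ τ j)) (M : ℕ) :
    WordHomotopic R (c₀ + M * c)
      ((List.range M).flatMap σ ++ ρ M) ((List.range M).flatMap τ) := by
  induction M with
  | zero => simpa using h₀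
  | succ M ih =>
    have h := ((hcell M).append_left ((List.range M).flatMap σ)).trans
      (by simpa only [List.append_assoc] using ih.append_right (τ M))
    simp only [List.range_succ, List.flatMap_append, List.flatMap_singleton, List.append_assoc]
      at h ⊢
    exact h.mono (by ring_nf; omega)

theorem WordHomotopic.of_combing (P : G → List S) (hP : P 1 = []) (c : G → ℕ)
    (htri : ∀ (g : G) (s : S), WordHomotopic R (c (g * s)) (P g ++ [s]) (P (g * s)))
    (w : List S) :
    WordHomotopic R (∑ i ∈ Finset.range w.length, c (wordProd S (w.take (i + 1))))
      w (P (wordProd S w)) := by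
  induction w using List.reverseRecOn with
  | nil => simpa [hP, WordHomotopic] using AreaLE.one
  | append_singleton w s ih =>
    have h := (ih.append_right [s]).trans (htri (wordProd S w) s)
    rw [List.length_append, List.length_singleton, Finset.sum_range_succ]
    convert h using 2
    · refine Finset.sum_congr rfl fun i hi => ?_
      rw [List.take_append_of_le_length (Finset.mem_range.1 hi)]
    · rw [List.take_of_length_le (by simp)]
      simp
    · simp

theorem area_le_of_areaLE (h : AreaLE R (wordToFree S w) k) : area S R w ≤ k := by
  obtain ⟨L, hL, hmem, hprod⟩ := h
  have hconj (i : Fin L.length) : ∃ v r, (r ∈ R ∨ r⁻¹ ∈ R) ∧ v * r * v⁻¹ = L[i] := by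
    obtain ⟨r, hr, hconj⟩ := Group.mem_conjugatesOfSet_iff.1 (hmem _ (List.getElem_mem i.2))
    obtain ⟨v, hv⟩ := isConj_iff.1 hconj
    exact ⟨v, r, hr, hv⟩
  choose v r hr hvr using hconj
  refine (Nat.sInf_le ?_).trans hL
  refine ⟨v, r, hr, ?_⟩
  rw [← hprod]
  conv_lhs => rw [← List.ofFn_getElem (xs := L)]
  simp only [hvr]
  rfl

end Homotopy

section Geodesic

variable {X : Type*} [MetricSpace X]

namespace IsGeodesic

variable {γ : ℝ → X} {x y : X} {s t : ℝ}

theorem dist_apply_mul (hγ : IsGeodesic γ x y) (hs : s ∈ Set.Icc (0 : ℝ) 1)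
    (ht : t ∈ Set.Icc (0 : ℝ) 1) :
    dist (γ (s * dist x y)) (γ (t * dist x y)) = |s - t| * dist x y := by
  have hd := dist_nonneg (x := x) (y := y)
  rw [hγ.2.2 _ ⟨by nlinarith [hs.1], by nlinarith [hs.2]⟩ _
    ⟨by nlinarith [ht.1], by nlinarith [ht.2]⟩, ← sub_mul, abs_mul, abs_of_nonneg hd]

theorem dist_left_apply_mul (hγ : IsGeodesic γ x y) (ht : t ∈ Set.Icc (0 : ℝ) 1) :
    dist x (γ (t * dist x y)) = t * dist x y := by
  simpa [hγ.1, abs_of_nonneg ht.1] using hγ.dist_apply_mul ⟨le_rfl, zero_le_one⟩ ht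

theorem dist_apply_mul_right (hγ : IsGeodesic γ x y) (ht : t ∈ Set.Icc (0 : ℝ) 1) :
    dist (γ (t * dist x y)) y = (1 - t) * dist x y := by
  simpa [hγ.2.1, abs_of_nonpos (sub_nonpos.2 ht.2)] using
    hγ.dist_apply_mul ht ⟨zero_le_one, le_rfl⟩

theorem dist_apply_div_succ (hγ : IsGeodesic γ x y) {j k : ℕ} (hjk : j < k) :
    dist (γ (j / k * dist x y)) (γ ((j + 1 : ℕ) / k * dist x y)) = dist x y / k := by
  have hk : (0 : ℝ) < k := by exact_mod_cast (Nat.zero_le j).trans_lt hjk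
  have hjk : ((j + 1 : ℕ) : ℝ) ≤ k := by exact_mod_cast hjk
  have hjk' : ((j : ℕ) : ℝ) ≤ k := by push_cast at hjk; linarith
  rw [hγ.dist_apply_mul ⟨by positivity, div_le_one_of_le₀ hjk' hk.le⟩
    ⟨by positivity, div_le_one_of_le₀ hjk hk.le⟩, ← sub_div, abs_div, abs_of_pos hk]
  push_cast
  rw [sub_add_cancel_left, abs_neg, abs_one, one_div_mul_eq_div]

end IsGeodesic

namespace IsCAT0

variable {α β : ℝ → X} {o a b : X} {t t' : ℝ}

theorem dist_apply_mul_le (hcat : IsCAT0 X) (hα : IsGeodesic α o a) (hβ : IsGeodesic β o b)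
    (ht : t ∈ Set.Icc (0 : ℝ) 1) :
    dist (α (t * dist o a)) (β (t * dist o b)) ≤ t * dist a b := by
  set x := α (t * dist o a)
  have hxo : dist x o = t * dist o a := by rw [dist_comm]; exact hα.dist_left_apply_mul ht
  have h₁ := hcat x o b β hβ t ht
  have h₂ := hcat b o a α hα t ht
  rw [dist_comm b o, dist_comm b a, dist_comm b x] at h₂
  rw [hxo] at h₁
  have hsq : dist x (β (t * dist o b)) ^ 2 ≤ (t * dist a b) ^ 2 := by
    nlinarith [mul_le_mul_of_nonneg_left h₂ ht.1]
  exact (pow_le_pow_iff_left₀ dist_nonneg (mul_nonneg ht.1 dist_nonneg) two_ne_zero).1 hsq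

theorem dist_apply_mul_le_add (hcat : IsCAT0 X) (hα : IsGeodesic α o a) (hβ : IsGeodesic β o b)
    (ht : t ∈ Set.Icc (0 : ℝ) 1) (ht' : t' ∈ Set.Icc (0 : ℝ) 1) :
    dist (α (t * dist o a)) (β (t' * dist o b)) ≤ t * dist a b + |t - t'| * dist o b :=
  (dist_triangle _ (β (t * dist o b)) _).trans <|
    add_le_add (hcat.dist_apply_mul_le hα hβ ht) (hβ.dist_apply_mul ht ht').le

end IsCAT0

theorem smul_ball_inter_ball_nonempty_iff {G : Type*} [Group G] [MulAction G X]
    [IsIsometricSMul G X] (hgeo : IsGeodesicSpace X) (g : G) (p : X) (r : ℝ) :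
    ((g • ·) '' Metric.ball p r ∩ Metric.ball p r).Nonempty ↔ dist (g • p) p < 2 * r := by
  constructor
  · rintro ⟨_, ⟨y, hy, rfl⟩, hgy⟩
    rw [Metric.mem_ball] at hy hgy
    calc dist (g • p) p ≤ dist (g • p) (g • y) + dist (g • y) p := dist_triangle _ _ _
      _ < 2 * r := by rw [dist_smul, dist_comm]; linarith
  · intro h
    obtain ⟨γ, hγ⟩ := hgeo p (g • p)
    have hhalf : (1 / 2 : ℝ) ∈ Set.Icc (0 : ℝ) 1 := by norm_num
    set z := γ (1 / 2 * dist p (g • p))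
    have hz : dist z p < r := by
      rw [dist_comm, hγ.dist_left_apply_mul hhalf, dist_comm]; linarith
    have hz' : dist (g⁻¹ • z) p < r := by
      rw [← dist_smul g, smul_inv_smul, hγ.dist_apply_mul_right hhalf, dist_comm]; linarith
    exact ⟨z, ⟨g⁻¹ • z, Metric.mem_ball.2 hz', smul_inv_smul g z⟩, hz⟩

end Geodesic

section Action

variable {G X : Type*} [Group G] [MetricSpace X] [MulAction G X] {S : Set G} {p : X} {D : ℝ}

structure IsNetGeneratingSet (S : Set G) (p : X) (D : ℝ) : Prop where
  isGeodesicSpace : IsGeodesicSpace X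
  pos : 0 < D
  exists_dist_le : ∀ x : X, ∃ g : G, dist x (g • p) ≤ 2 * D
  mem_iff : ∀ g, g ∈ S ↔ dist (g • p) p < 8 * D

structure Waypoints (p : X) (D : ℝ) (γ : ℝ → X) (g : G) (k : ℕ) where
  q : ℕ → G
  q_zero : q 0 = 1
  q_of_le : ∀ j, k ≤ j → q j = g
  dist_le : ∀ j ≤ k, dist (q j • p) (γ (j / k * dist p (g • p))) ≤ 2 * D

theorem Waypoints.dist_succ_le {γ : ℝ → X} {g : G} {k : ℕ} (W : Waypoints p D γ g k)
    (hγ : IsGeodesic γ p (g • p)) (hD : 0 ≤ D) (j : ℕ) :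
    dist (W.q j • p) (W.q (j + 1) • p) ≤ 4 * D + dist p (g • p) / k := by
  rcases lt_or_ge j k with hjk | hkj
  · set a := γ (j / k * dist p (g • p))
    set b := γ ((j + 1 : ℕ) / k * dist p (g • p))
    have h₁ : dist (W.q j • p) a ≤ 2 * D := W.dist_le j hjk.le
    have h₂ : dist (W.q (j + 1) • p) b ≤ 2 * D := W.dist_le (j + 1) hjk
    have h₃ : dist a b = dist p (g • p) / k := hγ.dist_apply_div_succ hjk
    linarith [dist_triangle4 (W.q j • p) a b (W.q (j + 1) • p), dist_comm b (W.q (j + 1) • p)]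
  · rw [W.q_of_le j hkj, W.q_of_le (j + 1) (by omega), dist_self]
    positivity

theorem IsNetGeneratingSet.nonempty_waypoints (hS : IsNetGeneratingSet S p D) {γ : ℝ → X}
    {g : G} (hγ : IsGeodesic γ p (g • p)) (k : ℕ) (hk : k = 0 → g = 1) :
    Nonempty (Waypoints p D γ g k) := by
  choose f hf using hS.exists_dist_le
  have hD : 0 ≤ 2 * D := by linarith [hS.pos]
  refine ⟨⟨fun j => if k ≤ j then g else if j = 0 then 1 else f (γ (j / k * dist p (g • p))),
    ?_, fun j hj => if_pos hj, fun j hj => ?_⟩⟩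
  · rcases Nat.eq_zero_or_pos k with rfl | hk0
    · simp [hk rfl]
    · simp [Nat.not_le.2 hk0]
  · split_ifs with hkj hj0
    · obtain rfl := le_antisymm hj hkj
      rcases Nat.eq_zero_or_pos j with rfl | hj0
      · simp [hk rfl, hγ.1, hD]
      · rw [div_self (by positivity), one_mul, hγ.2.1, dist_self]
        exact hD
    · simp [hj0, hγ.1, hD]
    · rw [dist_comm]
      exact hf _

theorem IsNetGeneratingSet.finite [ProperSpace X] (hS : IsNetGeneratingSet S p D)
    (hpd : ∀ K K' : Set X, IsCompact K → IsCompact K' →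
      {g : G | ((g • ·) '' K ∩ K').Nonempty}.Finite) : S.Finite := by
  have hK := isCompact_closedBall p (8 * D)
  refine (hpd _ _ hK hK).subset fun g hg => ⟨g • p, ⟨p, ?_, rfl⟩, ?_⟩
  · simpa using hS.pos.le
  · exact Metric.mem_closedBall.2 ((hS.mem_iff g).1 hg).le

variable [IsIsometricSMul G X]

theorem dist_inv_mul_smul (a b : G) (p : X) :
    dist ((a⁻¹ * b) • p) p = dist (b • p) (a • p) := by
  rw [← dist_smul a, smul_smul, mul_inv_cancel_left]

namespace IsNetGeneratingSet

theorem inv_mem (hS : IsNetGeneratingSet S p D) {g : G} (hg : g ∈ S) : g⁻¹ ∈ S := by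
  rw [hS.mem_iff] at hg ⊢
  rwa [← dist_smul g, smul_inv_smul, dist_comm]

theorem exists_word_of_dist_lt (hS : IsNetGeneratingSet S p D) {g : G} {k : ℕ}
    (hk : dist p (g • p) < 4 * D * k) : ∃ w : List S, w.length ≤ k ∧ wordProd S w = g := by
  have hk0 : 0 < k := Nat.pos_of_ne_zero fun h => by
    rw [h, Nat.cast_zero, mul_zero] at hk
    linarith [dist_nonneg (x := p) (y := g • p)]
  obtain ⟨γ, hγ⟩ := hS.isGeodesicSpace p (g • p)
  obtain ⟨W⟩ := hS.nonempty_waypoints hγ k (by omega)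
  have hmem : ∀ j, (W.q j)⁻¹ * W.q (j + 1) ∈ S := fun j => by
    have hkR : (0 : ℝ) < k := by exact_mod_cast hk0
    have hstep := W.dist_succ_le hγ hS.pos.le j
    have : dist p (g • p) / k < 4 * D := by rwa [div_lt_iff₀ hkR]
    rw [hS.mem_iff, dist_inv_mul_smul, dist_comm]
    linarith
  refine ⟨(List.range k).flatMap fun j => [⟨_, hmem j⟩], by simp, ?_⟩
  rw [wordProd_flatMap_range W.q _ (fun j => by simp), W.q_zero, W.q_of_le k le_rfl, inv_one,
    one_mul]

theorem exists_length_eq_wordDist (hS : IsNetGeneratingSet S p D) (g : G) :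
    ∃ w : List S, w.length = wordDist S g 1 ∧ wordProd S w = g := by
  obtain ⟨k, hk⟩ := exists_nat_gt (dist p (g • p) / (4 * D))
  obtain ⟨w, -, hw⟩ := hS.exists_word_of_dist_lt (k := k)
    (by rwa [div_lt_iff₀ (by linarith [hS.pos]), mul_comm] at hk)
  obtain ⟨w', hlen, hprod⟩ := Nat.sInf_mem (⟨w.length, w, rfl, by simp [hw]⟩ :
    {n | ∃ w : List S, w.length = n ∧ wordProd S w = (1 : G)⁻¹ * g}.Nonempty)
  exact ⟨w', hlen, by simpa using hprod⟩

theorem dist_wordProd_smul_le (hS : IsNetGeneratingSet S p D) (w : List S) :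
    dist p (wordProd S w • p) ≤ 8 * D * w.length := by
  induction w with
  | nil => simp
  | cons a w ih =>
    have ha := (hS.mem_iff a).1 a.2
    calc dist p (wordProd S (a :: w) • p)
        ≤ dist p ((a : G) • p) + dist ((a : G) • p) ((a : G) • wordProd S w • p) :=
          by rw [wordProd_cons, mul_smul]; exact dist_triangle _ _ _
      _ ≤ 8 * D * (a :: w).length := by
          rw [dist_smul, dist_comm, List.length_cons, Nat.cast_succ]
          linarith

theorem dist_le_wordDist (hS : IsNetGeneratingSet S p D) (g : G) :
    dist p (g • p) ≤ 8 * D * wordDist S g 1 := by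
  obtain ⟨w, hlen, rfl⟩ := hS.exists_length_eq_wordDist g
  simpa [hlen] using hS.dist_wordProd_smul_le w

theorem eq_one_of_wordDist_eq_zero (hS : IsNetGeneratingSet S p D) {g : G}
    (h : wordDist S g 1 = 0) : g = 1 := by
  obtain ⟨w, hlen, rfl⟩ := hS.exists_length_eq_wordDist g
  simp [List.length_eq_zero_iff.1 (hlen.trans h)]

theorem wordDist_mul_le (hS : IsNetGeneratingSet S p D) (g : G) (s : S) :
    wordDist S (g * s) 1 ≤ wordDist S g 1 + 1 := by
  obtain ⟨w, hlen, rfl⟩ := hS.exists_length_eq_wordDist g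
  simpa [hlen] using wordDist_le_length (wordProd_append w [s])

theorem wordDist_le_mul (hS : IsNetGeneratingSet S p D) (g : G) (s : S) :
    wordDist S g 1 ≤ wordDist S (g * s) 1 + 1 := by
  obtain ⟨w, hlen, hw⟩ := hS.exists_length_eq_wordDist (g * s)
  have : wordProd S (w ++ [⟨_, hS.inv_mem s.2⟩]) = g := by simp [hw]
  simpa [hlen] using wordDist_le_length this

theorem closure_eq_top (hS : IsNetGeneratingSet S p D) : Subgroup.closure S = ⊤ :=
  eq_top_iff.2 fun g _ => by
    obtain ⟨w, -, rfl⟩ := hS.exists_length_eq_wordDist g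
    exact wordProd_mem_closure w

theorem inv_eq (hS : IsNetGeneratingSet S p D) : S⁻¹ = S :=
  Set.ext fun g => ⟨fun hg => inv_inv g ▸ hS.inv_mem hg, hS.inv_mem⟩

end IsNetGeneratingSet

end Action

theorem abs_div_sub_div_mul_le {j m m' : ℕ} {L C : ℝ} (hjm : j ≤ m) (hjm' : j ≤ m')
    (hmm' : m ≤ m' + 1) (hm'm : m' ≤ m + 1) (hL : L ≤ C * m') (hL0 : 0 ≤ L) (hC : 0 ≤ C) :
    |(j : ℝ) / m - j / m'| * L ≤ C := by
  rcases Nat.eq_zero_or_pos j with rfl | hj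
  · simpa using hC
  have hm : (0 : ℝ) < m := by exact_mod_cast hj.trans_le hjm
  have hm' : (0 : ℝ) < m' := by exact_mod_cast hj.trans_le hjm'
  have hjm : (j : ℝ) ≤ m := by exact_mod_cast hjm
  have h₁ : (m : ℝ) ≤ m' + 1 := by exact_mod_cast hmm'
  have h₂ : (m' : ℝ) ≤ m + 1 := by exact_mod_cast hm'm
  have key : |(j : ℝ) / m - j / m'| ≤ j / (m * m') := by
    rw [div_sub_div _ _ hm.ne' hm'.ne', abs_div, abs_of_pos (mul_pos hm hm')]
    gcongr
    rw [abs_le]; constructor <;> nlinarith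
  calc |(j : ℝ) / m - j / m'| * L ≤ j / (m * m') * (C * m') := by gcongr
    _ = C * (j / m) := by field_simp
    _ ≤ C := mul_le_of_le_one_right hC ((div_le_one hm).2 hjm)

section Combing

variable {G X : Type*} [Group G] [MetricSpace X] [MulAction G X] {S : Set G} {p : X} {D : ℝ}
  {g : G} {R : Set (FreeGroup S)} {n : ℕ}

structure CombingPath (S : Set G) (p : X) (D : ℝ) (g : G) where
  γ : ℝ → X
  isGeodesic : IsGeodesic γ p (g • p)
  waypoints : Waypoints p D γ g (wordDist S g 1)
  step : ℕ → List S
  length_step_le : ∀ j, (step j).length ≤ 4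
  wordProd_step : ∀ j, wordProd S (step j) = (waypoints.q j)⁻¹ * waypoints.q (j + 1)
  step_of_le : ∀ j, wordDist S g 1 ≤ j → step j = []

namespace CombingPath

noncomputable def word (c : CombingPath S p D g) : List S :=
  (List.range (wordDist S g 1)).flatMap c.step

theorem flatMap_step_of_le (c : CombingPath S p D g) {M : ℕ} (hM : wordDist S g 1 ≤ M) :
    (List.range M).flatMap c.step = c.word :=
  flatMap_range_eq_of_le c.step_of_le hM

end CombingPath

variable [IsIsometricSMul G X]

theorem IsNetGeneratingSet.nonempty_combingPath (hS : IsNetGeneratingSet S p D) (g : G) :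
    Nonempty (CombingPath S p D g) := by
  set m := wordDist S g 1
  obtain ⟨γ, hγ⟩ := hS.isGeodesicSpace p (g • p)
  obtain ⟨W⟩ := hS.nonempty_waypoints hγ m hS.eq_one_of_wordDist_eq_zero
  have hstep (j : ℕ) : ∃ w : List S, w.length ≤ 4 ∧ wordProd S w = (W.q j)⁻¹ * W.q (j + 1) := by
    apply hS.exists_word_of_dist_lt
    have hL : dist p (g • p) / m ≤ 8 * D :=
      div_le_of_le_mul₀ (Nat.cast_nonneg _) (by linarith [hS.pos]) (hS.dist_le_wordDist g)
    rw [dist_comm, dist_inv_mul_smul, dist_comm]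
    push_cast
    linarith [W.dist_succ_le hγ hS.pos.le j, hS.pos]
  choose σ hσlen hσprod using hstep
  refine ⟨⟨γ, hγ, W, fun j => if m ≤ j then [] else σ j, fun j => ?_, fun j => ?_,
    fun j hj => if_pos hj⟩⟩
  · split_ifs
    exacts [Nat.zero_le _, hσlen j]
  · split_ifs with hj
    · simp [W.q_of_le j hj, W.q_of_le (j + 1) (by omega)]
    · exact hσprod j

namespace CombingPath

variable {s : S}

theorem dist_waypoints_le (hS : IsNetGeneratingSet S p D) (hcat : IsCAT0 X)
    (c : CombingPath S p D g) (c' : CombingPath S p D (g * s)) (j : ℕ) :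
    dist (c.waypoints.q j • p) (c'.waypoints.q j • p) ≤ 20 * D := by
  set m := wordDist S g 1
  set m' := wordDist S (g * s) 1
  have hmm' := hS.wordDist_le_mul g s
  have hm'm := hS.wordDist_mul_le g s
  have hs : dist (g • p) ((g * s) • p) < 8 * D := by
    rw [mul_smul, dist_smul, dist_comm]; exact (hS.mem_iff s).1 s.2
  by_cases hj : j ≤ m ∧ j ≤ m'
  · obtain ⟨hjm, hjm'⟩ := hj
    have ht : (j : ℝ) / m ∈ Set.Icc (0 : ℝ) 1 :=
      ⟨by positivity, div_le_one_of_le₀ (by exact_mod_cast hjm) (Nat.cast_nonneg _)⟩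
    have ht' : (j : ℝ) / m' ∈ Set.Icc (0 : ℝ) 1 :=
      ⟨by positivity, div_le_one_of_le₀ (by exact_mod_cast hjm') (Nat.cast_nonneg _)⟩
    have hmid := hcat.dist_apply_mul_le_add c.isGeodesic c'.isGeodesic ht ht'
    have hreparam := abs_div_sub_div_mul_le hjm hjm' hmm' hm'm (hS.dist_le_wordDist (g * s))
      dist_nonneg (by linarith [hS.pos] : 0 ≤ 8 * D)
    have hscale : (j : ℝ) / m * dist (g • p) ((g * s) • p) ≤ 8 * D :=
      (mul_le_of_le_one_left dist_nonneg ht.2).trans hs.le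
    have h₁ := c.waypoints.dist_le j hjm
    have h₂ := c'.waypoints.dist_le j hjm'
    calc dist (c.waypoints.q j • p) (c'.waypoints.q j • p)
        ≤ dist (c.waypoints.q j • p) (c.γ (j / m * dist p (g • p)))
          + dist (c.γ (j / m * dist p (g • p))) (c'.γ (j / m' * dist p ((g * s) • p)))
          + dist (c'.γ (j / m' * dist p ((g * s) • p))) (c'.waypoints.q j • p) :=
            dist_triangle4 _ _ _ _
      _ ≤ 2 * D + 16 * D + 2 * D := by rw [dist_comm (c'.γ _)]; gcongr; linarith
      _ = 20 * D := by ring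
  · -- `m` and `m'` differ by at most one, so here both paths have reached their endpoints
    rw [c.waypoints.q_of_le j (by omega), c'.waypoints.q_of_le j (by omega)]
    linarith [hS.pos]

theorem wordHomotopic_append_singleton (hS : IsNetGeneratingSet S p D) (hcat : IsCAT0 X)
    (hR : ∀ w : List S, w.length ≤ n → wordProd S w = 1 → wordToFree S w ∈ R)
    (hn : 24 ≤ n) (c : CombingPath S p D g) (c' : CombingPath S p D (g * s)) :
    WordHomotopic R (24 * (wordDist S (g * s) 1 + 1)) (c.word ++ [s]) c'.word := by
  -- Rung `ρ j` joins the `j`-th vertices of the two paths; at `M` both paths have stopped at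
  -- `g` and `g * s`, so the last rung can be traded for the letter `s`.
  set M := max (wordDist S g 1) (wordDist S (g * s) 1)
  have hM : M ≤ wordDist S (g * s) 1 + 1 := max_le (hS.wordDist_le_mul g s) (Nat.le_succ _)
  have hrung : ∀ j, ∃ ρ : List S, ρ.length ≤ 8 ∧
      wordProd S ρ = (c.waypoints.q j)⁻¹ * c'.waypoints.q j := fun j =>
    hS.exists_word_of_dist_lt <| by
      rw [dist_comm, dist_inv_mul_smul, dist_comm]
      push_cast
      linarith [c.dist_waypoints_le hS hcat c' j, hS.pos]
  choose ρ hρlen hρprod using hrung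
  have hhom : ∀ {u v : List S}, wordProd S u = wordProd S v → u.length + v.length ≤ n →
      WordHomotopic R (1 + v.length) u v :=
    wordHomotopic_of_wordProd_eq (fun _ => hS.inv_mem) hR (by omega)
  have hbase : WordHomotopic R 1 (ρ 0) [] := by
    have := hρlen 0
    refine hhom ?_ ?_
    · simp [hρprod, c.waypoints.q_zero, c'.waypoints.q_zero]
    · simp only [List.length_nil]; omega
  have hcell (j : ℕ) : WordHomotopic R 13 (c.step j ++ ρ (j + 1)) (ρ j ++ c'.step j) := by
    have := hρlen j; have := hρlen (j + 1)
    have := c.length_step_le j; have := c'.length_step_le j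
    refine (hhom ?_ ?_).mono ?_
    · simp only [wordProd_append, wordProd_step, hρprod]; group
    · simp only [List.length_append]; omega
    · simp only [List.length_append]; omega
  have hladder := WordHomotopic.ladder hbase hcell M
  rw [c.flatMap_step_of_le (le_max_left _ _), c'.flatMap_step_of_le (le_max_right _ _)]
    at hladder
  have hend : WordHomotopic R 9 (c.word ++ [s]) (c.word ++ ρ M) := by
    have := hρlen M
    refine ((hhom ?_ ?_).mono ?_).append_left _
    · simp [hρprod, c.waypoints.q_of_le M (le_max_left _ _),
        c'.waypoints.q_of_le M (le_max_right _ _)]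
    · simp only [List.length_singleton]; omega
    · omega
  exact (hend.trans hladder).mono (by nlinarith)

end CombingPath

theorem IsNetGeneratingSet.wordHomotopic_nil (hS : IsNetGeneratingSet S p D) (hcat : IsCAT0 X)
    (hR : ∀ w : List S, w.length ≤ n → wordProd S w = 1 → wordToFree S w ∈ R)
    (hn : 24 ≤ n) {w : List S} (hw : wordProd S w = 1) :
    WordHomotopic R (24 * ∑ i ∈ Finset.range w.length,
      (wordDist S (wordProd S (w.take (i + 1))) 1 + 1)) w [] := by
  let P : G → List S := fun g => (hS.nonempty_combingPath g).some.word
  have hP : P 1 = [] := by simp [P, CombingPath.word, wordDist_one]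
  have h := WordHomotopic.of_combing P hP (fun g => 24 * (wordDist S g 1 + 1))
    (fun g s => CombingPath.wordHomotopic_append_singleton hS hcat hR hn _ _) w
  rwa [hw, hP, ← Finset.mul_sum] at h

end Combing

section Presentation

variable {G : Type*} [Group G] {S : Set G}

theorem Set.Finite.setOf_wordToFree (hS : S.Finite) (n : ℕ) (P : List S → Prop) :
    {x | ∃ w : List S, w.length ≤ n ∧ P w ∧ wordToFree S w = x}.Finite := by
  have := hS.to_subtype
  exact ((List.finite_length_le S n).image (wordToFree S)).subset
    fun _ ⟨w, hw, _, hx⟩ => ⟨w, hw, hx⟩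

theorem exists_wordToFree_mul_inv_mem (hsymm : ∀ s ∈ S, s⁻¹ ∈ S)
    {N : Subgroup (FreeGroup S)} [N.Normal]
    (hN : ∀ w : List S, wordProd S w = 1 → wordToFree S w ∈ N) (x : FreeGroup S) :
    ∃ u : List S, wordToFree S u * x⁻¹ ∈ N := by
  induction x using FreeGroup.induction_on with
  | C1 => exact ⟨[], by simp⟩
  | of s => exact ⟨[s], by simp⟩
  | inv_of s _ =>
    refine ⟨[⟨_, hsymm s s.2⟩], ?_⟩
    simpa using hN [⟨_, hsymm s s.2⟩, s] (by simp)
  | mul y z hy hz =>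
    obtain ⟨u, hu⟩ := hy
    obtain ⟨v, hv⟩ := hz
    refine ⟨u ++ v, ?_⟩
    have h := mul_mem (‹N.Normal›.conj_mem _ hv (wordToFree S u)) hu
    simpa [mul_assoc] using h

theorem normalClosure_eq_ker_muEval (hsymm : ∀ s ∈ S, s⁻¹ ∈ S) {R : Set (FreeGroup S)}
    (hRker : ∀ r ∈ R, muEval S r = 1)
    (hfill : ∀ w : List S, wordProd S w = 1 → wordToFree S w ∈ Subgroup.normalClosure R) :
    Subgroup.normalClosure R = (muEval S).ker := by
  have hle : Subgroup.normalClosure R ≤ (muEval S).ker :=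
    Subgroup.normalClosure_le_normal hRker
  refine le_antisymm hle fun x hx => ?_
  obtain ⟨u, hu⟩ := exists_wordToFree_mul_inv_mem hsymm hfill x
  have hu1 : wordProd S u = 1 := by simpa [(muEval S).mem_ker.1 hx] using hle hu
  simpa using mul_mem (inv_mem hu) (hfill u hu1)

end Presentation

/-- For a CAT(0) group with the explicit generating set
`S = {g : g·B(p,4D) ∩ B(p,4D) ≠ ∅}` and relator set `R` the words of length at most
`46` representing the identity, the radial isoperimetric inequality holds with
constant `24`. -/
theorem cat0_group_explicit_quadratic_radial_isoperimetric
    {G X : Type*} [Group G] [MetricSpace X] [MulAction G X]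
    (hgeo : IsGeodesicSpace X) (hcat : IsCAT0 X) (hproper : ProperSpace X)
    -- `G` acts by isometries
    (hiso : ∀ (g : G) (x y : X), dist (g • x) (g • y) = dist x y)
    -- properly discontinuously
    (hpd : ∀ K K' : Set X, IsCompact K → IsCompact K' →
      {g : G | ((g • ·) '' K ∩ K').Nonempty}.Finite)
    -- and cocompactly
    (p : X) (D : ℝ) (hD : 0 < D)
    (hcocpt : ∀ x : X, ∃ g : G, dist x (g • p) ≤ 2 * D)
    (S : Set G)
    (hS : S = {g : G | ((g • ·) '' Metric.ball p (4 * D) ∩ Metric.ball p (4 * D)).Nonempty})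
    (R : Set (FreeGroup S))
    (hR : R = {x : FreeGroup S | ∃ w : List S,
      w.length ≤ 46 ∧ wordProd S w = 1 ∧ wordToFree S w = x}) :
    S.Finite ∧ S⁻¹ = S ∧ Subgroup.closure S = ⊤ ∧ R.Finite ∧
      Subgroup.normalClosure R = (muEval S).ker ∧
      ∀ w : List S, wordProd S w = 1 →
        area S R w ≤ 24 * ∑ i ∈ Finset.range w.length,
          (wordDist S (wordProd S (w.take (i + 1))) 1 + 1) := by
  have : IsIsometricSMul G X := ⟨fun g => Isometry.of_dist_eq (hiso g)⟩
  have hnet : IsNetGeneratingSet S p D := ⟨hgeo, hD, hcocpt, fun g => by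
    subst hS; exact (smul_ball_inter_ball_nonempty_iff hgeo g p _).trans (by ring_nf)⟩
  have hRmem : ∀ w : List S, w.length ≤ 46 → wordProd S w = 1 → wordToFree S w ∈ R :=
    fun w hlen hw => hR ▸ ⟨w, hlen, hw, rfl⟩
  have hfill := fun w (hw : wordProd S w = 1) => hnet.wordHomotopic_nil hcat hRmem (by norm_num) hw
  refine ⟨hnet.finite hpd, hnet.inv_eq, hnet.closure_eq_top, ?_, ?_,
    fun w hw => area_le_of_areaLE (hfill w hw).areaLE⟩
  · rw [hR]
    exact (hnet.finite hpd).setOf_wordToFree 46 _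
  · refine normalClosure_eq_ker_muEval (fun _ => hnet.inv_mem) ?_
      fun w hw => (hfill w hw).areaLE.mem_normalClosure
    intro r hr
    rw [hR] at hr
    obtain ⟨w, -, hw, rfl⟩ := hr
    simpa using hw
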